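/- arXiv:2603.24794 — 4 statements merged into one kernel-verified Lean document; each statement's English description precedes it below -/
import Mathlib

section
/- Let L be a Lie algebra over a field of characteristic zero and let a, b, c, d be elements of L satisfying [a,b] = c and [a,c] = d, with all other brackets among a, b, c, d equal to 0. Then for all nonnegative integers t and u, in the universal enveloping algebra U(L) one has a^t b^u = \sum_{k_1, k_2 \ge 0,\ k_1+k_2 \le u,\ k_1+2k_2 \le t} \binom{u}{k_1+k_2} \binom{t}{k_1+2k_2} \binom{k_1+k_2}{k_1} \frac{(k_1+2k_2)!}{2^{k_2}} \, d^{k_2} c^{k_1} b^{u-k_1-k_2} a^{t-k_1-2k_2}. -/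
/-!
Write `A, B, C, D` for the images of `a, b, c, d`. Then `B, C, D` commute and `ad A` sends
`B ↦ C ↦ D ↦ 0`, so left multiplication by `A` sends an ordered monomial `D^k₂ C^k₁ B^i A^r` to
`D^k₂ C^k₁ B^i A^(r+1) + i D^k₂ C^(k₁+1) B^(i-1) A^r + k₁ D^(k₂+1) C^(k₁-1) B^i A^r`.
Induction on `t` then gives `A^t B^u` as a combination of ordered monomials whose coefficient
factors as `u! / (i! k₁! k₂! 2^k₂)` (the coefficient of `D^k₂ C^k₁ B^i` in `(B + C + D/2)^u`)
times the falling factorial `t (t-1) ⋯ (t-k₁-2k₂+1)`; the recurrence for the first factor is a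
pair of Pascal-type identities, and that of the second is `(t+1)_j = t_j + j t_(j-1)`.
-/

open Finset

namespace Nat

theorem succ_descFactorial_eq_add (t j : ℕ) :
    (t + 1).descFactorial j = t.descFactorial j + j * t.descFactorial (j - 1) := by
  rcases j with _ | j
  · simp
  rw [succ_descFactorial_succ, descFactorial_succ, Nat.add_sub_cancel, ← add_mul]
  rcases le_or_gt j t with h | h
  · congr 1; omega
  · simp [descFactorial_eq_zero_iff_lt.mpr h]

def trinomial (u k₁ k₂ : ℕ) : ℕ := u.choose (k₁ + k₂) * (k₁ + k₂).choose k₁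

theorem trinomial_eq_zero_of_lt {u k₁ k₂ : ℕ} (h : u < k₁ + k₂) : trinomial u k₁ k₂ = 0 := by
  simp [trinomial, choose_eq_zero_of_lt h]

theorem succ_mul_trinomial_succ_left (u k₁ k₂ : ℕ) :
    (k₁ + 1) * trinomial u (k₁ + 1) k₂ = (u - (k₁ + k₂)) * trinomial u k₁ k₂ := by
  have h₁ := choose_succ_right_eq u (k₁ + k₂)
  have h₂ := add_one_mul_choose_eq (k₁ + k₂) k₁
  rw [trinomial, trinomial, show k₁ + 1 + k₂ = k₁ + k₂ + 1 by omega]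
  calc (k₁ + 1) * (u.choose (k₁ + k₂ + 1) * (k₁ + k₂ + 1).choose (k₁ + 1))
      = u.choose (k₁ + k₂ + 1) * ((k₁ + k₂ + 1) * (k₁ + k₂).choose k₁) := by rw [h₂]; ring
    _ = _ := by rw [← mul_assoc, h₁]; ring

theorem succ_mul_trinomial_succ_right (u k₁ k₂ : ℕ) :
    (k₂ + 1) * trinomial u k₁ (k₂ + 1) = (k₁ + 1) * trinomial u (k₁ + 1) k₂ := by
  have h := choose_succ_right_eq (k₁ + k₂ + 1) k₁
  rw [show k₁ + k₂ + 1 - k₁ = k₂ + 1 by omega] at h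
  rw [trinomial, trinomial, show k₁ + (k₂ + 1) = k₁ + k₂ + 1 by omega,
    show k₁ + 1 + k₂ = k₁ + k₂ + 1 by omega]
  calc (k₂ + 1) * (u.choose (k₁ + k₂ + 1) * (k₁ + k₂ + 1).choose k₁)
      = u.choose (k₁ + k₂ + 1) * ((k₁ + k₂ + 1).choose k₁ * (k₂ + 1)) := by ring
    _ = _ := by rw [← h]; ring

end Nat

section Commutation

variable {R : Type*} [Ring R] {A B C D : R}

theorem mul_pow_eq_pow_mul_add_nsmul (h : A * B = B * A + C) (hBC : Commute B C) (v : ℕ) :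
    A * B ^ v = B ^ v * A + v • (C * B ^ (v - 1)) := by
  induction v with
  | zero => simp
  | succ w ih =>
    rw [pow_succ, ← mul_assoc, ih, add_mul, mul_assoc, h, mul_add, ← mul_assoc, ← pow_succ,
      (hBC.pow_left w).eq, smul_mul_assoc, mul_assoc, Nat.add_sub_cancel, succ_nsmul]
    rcases w with _ | w
    · simp
    · rw [← pow_succ, Nat.add_sub_cancel]
      abel

theorem mul_pow_mul_pow_mul_pow_mul_pow (hAB : A * B = B * A + C) (hAC : A * C = C * A + D)
    (hAD : Commute A D) (hBC : Commute B C) (hCD : Commute C D) (k₁ k₂ v r : ℕ) :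
    A * (D ^ k₂ * C ^ k₁ * B ^ v * A ^ r)
      = D ^ k₂ * C ^ k₁ * B ^ v * A ^ (r + 1)
        + v • (D ^ k₂ * C ^ (k₁ + 1) * B ^ (v - 1) * A ^ r)
        + k₁ • (D ^ (k₂ + 1) * C ^ (k₁ - 1) * B ^ v * A ^ r) := by
  have hB := mul_pow_eq_pow_mul_add_nsmul hAB hBC v
  have hC := mul_pow_eq_pow_mul_add_nsmul hAC hCD k₁
  simp only [mul_assoc]
  rw [← mul_assoc A, (hAD.pow_right k₂).eq, mul_assoc, ← mul_assoc A, hC, add_mul, mul_assoc,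
    ← mul_assoc A, hB, add_mul, mul_assoc, ← pow_succ']
  simp only [smul_mul_assoc, mul_smul_comm, mul_add, mul_assoc]
  rw [← mul_assoc (C ^ k₁) C, ← pow_succ, ← mul_assoc (D ^ k₂) D, ← pow_succ]

end Commutation

theorem Finset.sum_range_succ_shift {M : Type*} [AddCommMonoid M] {f : ℕ → M} {n : ℕ}
    (h₀ : f 0 = 0) (hn : f (n + 1) = 0) :
    ∑ k ∈ range (n + 1), f (k + 1) = ∑ k ∈ range (n + 1), f k := by
  rw [← add_zero (∑ k ∈ range (n + 1), f (k + 1)), ← h₀, ← sum_range_succ', sum_range_succ, hn,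
    add_zero]

section Weight

variable (K : Type*) [Field K]

noncomputable def trinomialWeight (u k₁ k₂ : ℕ) : K := (Nat.trinomial u k₁ k₂ : K) / 2 ^ k₂

variable {K}

theorem trinomialWeight_eq_zero_of_lt {u k₁ k₂ : ℕ} (h : u < k₁ + k₂) :
    trinomialWeight K u k₁ k₂ = 0 := by
  simp [trinomialWeight, Nat.trinomial_eq_zero_of_lt h]

theorem succ_mul_trinomialWeight_succ_left (u k₁ k₂ : ℕ) :
    ((k₁ + 1 : ℕ) : K) * trinomialWeight K u (k₁ + 1) k₂
      = ((u - k₁ - k₂ : ℕ) : K) * trinomialWeight K u k₁ k₂ := by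
  simp only [trinomialWeight, mul_div_assoc', ← Nat.cast_mul, Nat.succ_mul_trinomial_succ_left,
    Nat.sub_sub]

theorem two_mul_succ_mul_trinomialWeight_succ_right [NeZero (2 : K)] (u k₁ k₂ : ℕ) :
    2 * ((k₂ + 1 : ℕ) : K) * trinomialWeight K u k₁ (k₂ + 1)
      = ((k₁ + 1 : ℕ) : K) * trinomialWeight K u (k₁ + 1) k₂ := by
  have h := congrArg (Nat.cast (R := K)) (Nat.succ_mul_trinomial_succ_right u k₁ k₂)
  push_cast at h
  simp only [trinomialWeight, pow_succ]
  field_simp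
  push_cast
  linear_combination h

end Weight

section Reindex

variable {K M : Type*} [Field K] [AddCommMonoid M] [Module K M]

theorem sum_trinomialWeight_shift_left (u : ℕ) (q : ℕ → K) (X : ℕ → ℕ → M) :
    ∑ k₁ ∈ range (u + 1), ∑ k₂ ∈ range (u + 1),
        (((u - k₁ - k₂ : ℕ) : K) * trinomialWeight K u k₁ k₂ * q (k₁ + 2 * k₂)) • X (k₁ + 1) k₂
      = ∑ k₁ ∈ range (u + 1), ∑ k₂ ∈ range (u + 1),
        ((k₁ : K) * trinomialWeight K u k₁ k₂ * q (k₁ + 2 * k₂ - 1)) • X k₁ k₂ := by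
  refine Eq.trans (sum_congr rfl fun k₁ _ => sum_congr rfl fun k₂ _ => ?_)
    (sum_range_succ_shift (f := fun k₁ => ∑ k₂ ∈ range (u + 1),
      ((k₁ : K) * trinomialWeight K u k₁ k₂ * q (k₁ + 2 * k₂ - 1)) • X k₁ k₂) ?_ ?_)
  · rw [← succ_mul_trinomialWeight_succ_left, show k₁ + 1 + 2 * k₂ - 1 = k₁ + 2 * k₂ by omega]
  · simp
  · exact sum_eq_zero fun k₂ _ => by rw [trinomialWeight_eq_zero_of_lt (by omega)]; simp

theorem sum_trinomialWeight_shift_diag [NeZero (2 : K)] (u : ℕ) (q : ℕ → K) (X : ℕ → ℕ → M) :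
    ∑ k₁ ∈ range (u + 1), ∑ k₂ ∈ range (u + 1),
        ((k₁ : K) * trinomialWeight K u k₁ k₂ * q (k₁ + 2 * k₂)) • X (k₁ - 1) (k₂ + 1)
      = ∑ k₁ ∈ range (u + 1), ∑ k₂ ∈ range (u + 1),
        (2 * (k₂ : K) * trinomialWeight K u k₁ k₂ * q (k₁ + 2 * k₂ - 1)) • X k₁ k₂ := by
  rw [← sum_range_succ_shift (f := fun k₁ => ∑ k₂ ∈ range (u + 1),
      ((k₁ : K) * trinomialWeight K u k₁ k₂ * q (k₁ + 2 * k₂)) • X (k₁ - 1) (k₂ + 1))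
    (by simp) (sum_eq_zero fun k₂ _ => by rw [trinomialWeight_eq_zero_of_lt (by omega)]; simp)]
  refine sum_congr rfl fun k₁ _ => Eq.trans (sum_congr rfl fun k₂ _ => ?_)
    (sum_range_succ_shift (f := fun k₂ =>
      (2 * (k₂ : K) * trinomialWeight K u k₁ k₂ * q (k₁ + 2 * k₂ - 1)) • X k₁ k₂) ?_ ?_)
  · rw [← two_mul_succ_mul_trinomialWeight_succ_right,
      show k₁ + 2 * (k₂ + 1) - 1 = k₁ + 1 + 2 * k₂ by omega, Nat.add_sub_cancel]
  · simp
  · rw [trinomialWeight_eq_zero_of_lt (by omega)]; simp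

end Reindex

section OrderedMonomial

variable {R : Type*} [Ring R]

def orderedMonomial (A B C D : R) (u t k₁ k₂ : ℕ) : R :=
  D ^ k₂ * C ^ k₁ * B ^ (u - k₁ - k₂) * A ^ (t - k₁ - 2 * k₂)

variable {A B C D : R}

theorem mul_orderedMonomial (hAB : A * B = B * A + C) (hAC : A * C = C * A + D)
    (hAD : Commute A D) (hBC : Commute B C) (hCD : Commute C D) {u t k₁ k₂ : ℕ}
    (h : k₁ + 2 * k₂ ≤ t) :
    A * orderedMonomial A B C D u t k₁ k₂
      = orderedMonomial A B C D u (t + 1) k₁ k₂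
        + (u - k₁ - k₂) • orderedMonomial A B C D u (t + 1) (k₁ + 1) k₂
        + k₁ • orderedMonomial A B C D u (t + 1) (k₁ - 1) (k₂ + 1) := by
  have e₁ : t + 1 - k₁ - 2 * k₂ = t - k₁ - 2 * k₂ + 1 := by omega
  have e₂ : u - (k₁ + 1) - k₂ = u - k₁ - k₂ - 1 := by omega
  have e₃ : t + 1 - (k₁ + 1) - 2 * k₂ = t - k₁ - 2 * k₂ := by omega
  rw [orderedMonomial, mul_pow_mul_pow_mul_pow_mul_pow hAB hAC hAD hBC hCD]
  simp only [orderedMonomial, e₁, e₂, e₃]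
  rcases k₁ with _ | k₁
  · simp only [zero_smul]
  · rw [show u - (k₁ + 1 - 1) - (k₂ + 1) = u - (k₁ + 1) - k₂ by omega,
      show t + 1 - (k₁ + 1 - 1) - 2 * (k₂ + 1) = t - (k₁ + 1) - 2 * k₂ by omega]

theorem smul_mul_orderedMonomial {K : Type*} [Field K] [Algebra K R] (hAB : A * B = B * A + C)
    (hAC : A * C = C * A + D) (hAD : Commute A D) (hBC : Commute B C) (hCD : Commute C D)
    (u t k₁ k₂ : ℕ) (x : K) :
    (x * (t.descFactorial (k₁ + 2 * k₂) : K)) • (A * orderedMonomial A B C D u t k₁ k₂)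
      = (x * (t.descFactorial (k₁ + 2 * k₂) : K)) • orderedMonomial A B C D u (t + 1) k₁ k₂
        + (((u - k₁ - k₂ : ℕ) : K) * x * (t.descFactorial (k₁ + 2 * k₂) : K)) •
          orderedMonomial A B C D u (t + 1) (k₁ + 1) k₂
        + ((k₁ : K) * x * (t.descFactorial (k₁ + 2 * k₂) : K)) •
          orderedMonomial A B C D u (t + 1) (k₁ - 1) (k₂ + 1) := by
  rcases le_or_gt (k₁ + 2 * k₂) t with h | h
  · rw [mul_orderedMonomial hAB hAC hAD hBC hCD h]
    module
  · simp [Nat.descFactorial_eq_zero_iff_lt.mpr h]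

end OrderedMonomial

theorem pow_mul_pow_eq_sum_trinomialWeight {K R : Type*} [Field K] [NeZero (2 : K)] [Ring R]
    [Algebra K R] {A B C D : R} (hAB : A * B = B * A + C) (hAC : A * C = C * A + D)
    (hAD : Commute A D) (hBC : Commute B C) (hCD : Commute C D) (t u : ℕ) :
    A ^ t * B ^ u = ∑ k₁ ∈ range (u + 1), ∑ k₂ ∈ range (u + 1),
      (trinomialWeight K u k₁ k₂ * (t.descFactorial (k₁ + 2 * k₂) : K)) •
        orderedMonomial A B C D u t k₁ k₂ := by
  induction t with
  | zero =>
    rw [pow_zero, one_mul, sum_eq_single_of_mem 0 (by simp) fun k₁ _ hk₁ => sum_eq_zero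
        fun k₂ _ => by simp [Nat.descFactorial_eq_zero_iff_lt.mpr (by omega : 0 < k₁ + 2 * k₂)],
      sum_eq_single_of_mem 0 (by simp) fun k₂ _ hk₂ => by
        simp [Nat.descFactorial_eq_zero_iff_lt.mpr (by omega : 0 < 2 * k₂)]]
    simp [trinomialWeight, Nat.trinomial, orderedMonomial]
  | succ s ih =>
    have hterm := fun k₁ k₂ => smul_mul_orderedMonomial (K := K) hAB hAC hAD hBC hCD u s k₁ k₂
      (trinomialWeight K u k₁ k₂)
    set T := orderedMonomial A B C D u (s + 1)
    have hleft := sum_trinomialWeight_shift_left u (fun j => (s.descFactorial j : K)) T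
    have hdiag := sum_trinomialWeight_shift_diag u (fun j => (s.descFactorial j : K)) T
    calc A ^ (s + 1) * B ^ u = A * (A ^ s * B ^ u) := by rw [pow_succ', mul_assoc]
      _ = ∑ k₁ ∈ range (u + 1), ∑ k₂ ∈ range (u + 1),
            (trinomialWeight K u k₁ k₂ * (s.descFactorial (k₁ + 2 * k₂) : K)) •
              (A * orderedMonomial A B C D u s k₁ k₂) := by
        simp only [ih, mul_sum, mul_smul_comm]
      _ = ∑ k₁ ∈ range (u + 1), ∑ k₂ ∈ range (u + 1),
            (trinomialWeight K u k₁ k₂ * (s.descFactorial (k₁ + 2 * k₂) : K)) • T k₁ k₂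
          + ∑ k₁ ∈ range (u + 1), ∑ k₂ ∈ range (u + 1),
            ((k₁ : K) * trinomialWeight K u k₁ k₂ * (s.descFactorial (k₁ + 2 * k₂ - 1) : K)) •
              T k₁ k₂
          + ∑ k₁ ∈ range (u + 1), ∑ k₂ ∈ range (u + 1),
            (2 * (k₂ : K) * trinomialWeight K u k₁ k₂
              * (s.descFactorial (k₁ + 2 * k₂ - 1) : K)) • T k₁ k₂ := by
        rw [← hleft, ← hdiag]
        simp only [hterm, sum_add_distrib]
      _ = _ := by
        simp only [← sum_add_distrib, ← add_smul, Nat.succ_descFactorial_eq_add]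
        refine sum_congr rfl fun k₁ _ => sum_congr rfl fun k₂ _ => ?_
        push_cast
        congr 1
        ring

theorem trinomialWeight_mul_descFactorial {K : Type*} [Field K] (u t k₁ k₂ : ℕ) :
    trinomialWeight K u k₁ k₂ * (t.descFactorial (k₁ + 2 * k₂) : K)
      = ((u.choose (k₁ + k₂) * t.choose (k₁ + 2 * k₂) * (k₁ + k₂).choose k₁
          * (k₁ + 2 * k₂).factorial : ℕ) : K) / 2 ^ k₂ := by
  rw [trinomialWeight, Nat.trinomial, Nat.descFactorial_eq_factorial_mul_choose]
  push_cast
  ring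

namespace UniversalEnvelopingAlgebra

variable {R L : Type*} [CommRing R] [LieRing L] [LieAlgebra R L]

attribute [local instance 100] LieRing.ofAssociativeRing

theorem ι_mul_ι_of_lie_eq {x y z : L} (h : ⁅x, y⁆ = z) :
    ι R x * ι R y = ι R y * ι R x + ι R z := by
  have h' := (ι R (L := L)).map_lie x y
  rw [h, Ring.lie_def] at h'
  rw [h', add_sub_cancel]

theorem commute_ι_of_lie_eq_zero {x y : L} (h : ⁅x, y⁆ = 0) : Commute (ι R x) (ι R y) := by
  have := ι_mul_ι_of_lie_eq (R := R) h
  rwa [map_zero, add_zero] at this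

end UniversalEnvelopingAlgebra

open UniversalEnvelopingAlgebra

theorem stmt_2_general {K : Type*} [Field K] [CharZero K]
    {L : Type*} [LieRing L] [LieAlgebra K L]
    (a b c d : L)
    (hab : ⁅a, b⁆ = c) (hac : ⁅a, c⁆ = d) (had : ⁅a, d⁆ = 0) (hbc : ⁅b, c⁆ = 0) (hcd : ⁅c, d⁆ = 0)
    (t u : ℕ) :
    (ι K a : UniversalEnvelopingAlgebra K L) ^ (t) * (ι K b : UniversalEnvelopingAlgebra K L) ^ (u) =
      ∑ k1 ∈ Finset.range (u + 1), ∑ k2 ∈ Finset.range (u + 1),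
        if k1 + k2 ≤ u ∧ k1 + 2 * k2 ≤ t then
          (((u.choose (k1 + k2) * t.choose (k1 + 2 * k2) * (k1 + k2).choose k1
              * (k1 + 2 * k2).factorial : ℕ) : K) / 2 ^ k2) •
            ((ι K d : UniversalEnvelopingAlgebra K L) ^ (k2) * (ι K c : UniversalEnvelopingAlgebra K L) ^ (k1) * (ι K b : UniversalEnvelopingAlgebra K L) ^ (u - k1 - k2) * (ι K a : UniversalEnvelopingAlgebra K L) ^ (t - k1 - 2 * k2))
        else 0 := by
  rw [pow_mul_pow_eq_sum_trinomialWeight (K := K) (ι_mul_ι_of_lie_eq hab)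
    (ι_mul_ι_of_lie_eq hac) (commute_ι_of_lie_eq_zero had) (commute_ι_of_lie_eq_zero hbc)
    (commute_ι_of_lie_eq_zero hcd)]
  refine sum_congr rfl fun k₁ _ => sum_congr rfl fun k₂ _ => ?_
  split_ifs with h
  · rw [trinomialWeight_mul_descFactorial, orderedMonomial]
  · rcases not_and_or.mp h with h | h
    · rw [trinomialWeight_eq_zero_of_lt (by omega), zero_mul, zero_smul]
    · rw [Nat.descFactorial_eq_zero_iff_lt.mpr (by omega), Nat.cast_zero, mul_zero, zero_smul]

theorem stmt_2 {K : Type*} [Field K] [CharZero K]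
    {L : Type*} [LieRing L] [LieAlgebra K L]
    (a b c d : L)
    (hab : ⁅a, b⁆ = c) (hac : ⁅a, c⁆ = d) (had : ⁅a, d⁆ = 0) (hbc : ⁅b, c⁆ = 0) (hbd : ⁅b, d⁆ = 0) (hcd : ⁅c, d⁆ = 0)
    (t u : ℕ) :
    (ι K a : UniversalEnvelopingAlgebra K L) ^ (t) * (ι K b : UniversalEnvelopingAlgebra K L) ^ (u) =
      ∑ k1 ∈ Finset.range (u + 1), ∑ k2 ∈ Finset.range (u + 1),
        if k1 + k2 ≤ u ∧ k1 + 2 * k2 ≤ t then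
          (((u.choose (k1 + k2) * t.choose (k1 + 2 * k2) * (k1 + k2).choose k1
              * (k1 + 2 * k2).factorial : ℕ) : K) / 2 ^ k2) •
            ((ι K d : UniversalEnvelopingAlgebra K L) ^ (k2) * (ι K c : UniversalEnvelopingAlgebra K L) ^ (k1) * (ι K b : UniversalEnvelopingAlgebra K L) ^ (u - k1 - k2) * (ι K a : UniversalEnvelopingAlgebra K L) ^ (t - k1 - 2 * k2))
        else 0 :=
  stmt_2_general a b c d hab hac had hbc hcd t u
end

section
/- Let L be a Lie algebra over a field of characteristic zero and let a, b, c, d, g be elements of L satisfying [a,b] = c, [a,c] = d, [a,d] = g, and [b,c] = -g, with all other brackets among a, b, c, d, g equal to 0. Then for all natural numbers u ≥ 1, in the universal enveloping algebra U(L) one has a b^u = b^u a + u c b^{u-1} - \binom{u}{2} g b^{u-2}. -/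
/-!
Write `A, B, C, G` for the images of `a, b, c, g` in `U(L)`, so that `A B = B A + C`,
`C B = B C + G` and `G B = B G`. Moving `C` to the left past `B^k` costs `k` copies of `G`:
`B^k C = C B^k - k G B^(k-1)`. Pushing `A` through `B^n` one factor at a time leaves `n` copies
of `C` behind, and moving each back to the left past the powers of `B` costs
`0 + 1 + ⋯ + (n-1) = n.choose 2` copies of `G B^(n-2)`.
-/

open UniversalEnvelopingAlgebra

section Ring

variable {R : Type*} [Ring R] {a b c g : R}

theorem pow_succ_mul_eq_of_mul_eq_add (hcb : c * b = b * c + g) (hgb : Commute g b) (n : ℕ) :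
    b ^ (n + 1) * c = c * b ^ (n + 1) - (n + 1) • (g * b ^ n) := by
  induction n with
  | zero => simp [hcb]
  | succ n ih =>
    calc b ^ (n + 2) * c = b * (b ^ (n + 1) * c) := by rw [← mul_assoc, ← pow_succ']
      _ = (c * b - g) * b ^ (n + 1) - (n + 1) • (b * g * b ^ n) := by
        rw [ih, hcb, mul_sub, mul_smul_comm, ← mul_assoc, ← mul_assoc, add_sub_cancel_right]
      _ = c * b ^ (n + 2) - (n + 2) • (g * b ^ (n + 1)) := by
        rw [← hgb.eq, mul_assoc g, ← pow_succ', sub_mul, mul_assoc, ← pow_succ']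
        module

-- For `n < 2` the truncated exponents `n - 1` and `n - 2` only occur with coefficient `0`.
theorem mul_pow_eq_of_mul_eq_add (hab : a * b = b * a + c) (hcb : c * b = b * c + g)
    (hgb : Commute g b) (n : ℕ) :
    a * b ^ n = b ^ n * a + n • (c * b ^ (n - 1)) - n.choose 2 • (g * b ^ (n - 2)) := by
  have step (k : ℕ) (x : R) (h : a * b ^ (k + 1) = b ^ (k + 1) * a + (k + 1) • (c * b ^ k) - x) :
      a * b ^ (k + 2) = b ^ (k + 2) * a + (k + 2) • (c * b ^ (k + 1)) - (x * b + (k + 1) • (g * b ^ k)) := by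
    calc a * b ^ (k + 2) = (a * b ^ (k + 1)) * b := by rw [mul_assoc, ← pow_succ]
      _ = b ^ (k + 1) * (b * a + c) + (k + 1) • (c * b ^ (k + 1)) - x * b := by
        rw [h, ← hab, sub_mul, add_mul, smul_mul_assoc, mul_assoc, mul_assoc, ← pow_succ]
      _ = b ^ (k + 2) * a + (c * b ^ (k + 1) - (k + 1) • (g * b ^ k)) + (k + 1) • (c * b ^ (k + 1))
          - x * b := by
        rw [mul_add, pow_succ_mul_eq_of_mul_eq_add hcb hgb, ← mul_assoc, ← pow_succ]
      _ = _ := by module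
  match n with
  | 0 => simp
  | 1 => simp [hab]
  | n + 2 =>
    induction n with
    | zero => simpa using step 0 0 (by simpa using hab)
    | succ n ih =>
      rw [show n + 1 + 2 - 1 = n + 2 by omega, show n + 1 + 2 - 2 = n + 1 by omega]
      convert step (n + 1) _ ih using 2
      rw [Nat.add_sub_cancel, smul_mul_assoc, mul_assoc, ← pow_succ, ← add_smul,
        Nat.choose_succ_succ' (n + 2) 1, Nat.choose_one_right, add_comm]

end Ring

attribute [local instance] LieRing.ofAssociativeRing

theorem UniversalEnvelopingAlgebra.ι_mul_ι {K L : Type*} [CommRing K] [LieRing L] [LieAlgebra K L]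
    (x y : L) : ι K x * ι K y = ι K y * ι K x + ι K ⁅x, y⁆ := by
  rw [LieHom.map_lie, Ring.lie_def, add_sub_cancel]

theorem stmt_7_general {K : Type*} [Field K]
    {L : Type*} [LieRing L] [LieAlgebra K L]
    (a b c g : L)
    (hab : ⁅a, b⁆ = c) (hbc : ⁅b, c⁆ = -g)
    (hbg : ⁅b, g⁆ = 0)
    (u : ℕ) :
    (ι K a : UniversalEnvelopingAlgebra K L) ^ (1) * (ι K b : UniversalEnvelopingAlgebra K L) ^ (u) =
      (ι K b : UniversalEnvelopingAlgebra K L) ^ (u) * (ι K a : UniversalEnvelopingAlgebra K L) ^ (1)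
      + ((u : K)) • ((ι K c : UniversalEnvelopingAlgebra K L) ^ (1) * (ι K b : UniversalEnvelopingAlgebra K L) ^ (u - 1))
      - ((u.choose 2 : ℕ) : K) • ((ι K g : UniversalEnvelopingAlgebra K L) ^ (1) * (ι K b : UniversalEnvelopingAlgebra K L) ^ (u - 2)) := by
  have hcb : ⁅c, b⁆ = g := by rw [← lie_skew, hbc, neg_neg]
  have hgb : ⁅g, b⁆ = 0 := by rw [← lie_skew, hbg, neg_zero]
  simp only [pow_one, Nat.cast_smul_eq_nsmul]
  refine mul_pow_eq_of_mul_eq_add ?_ ?_ ?_ u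
  · rw [ι_mul_ι, hab]
  · rw [ι_mul_ι, hcb]
  · rw [Commute, SemiconjBy, ι_mul_ι, hgb, map_zero, add_zero]

theorem stmt_7 {K : Type*} [Field K] [CharZero K]
    {L : Type*} [LieRing L] [LieAlgebra K L]
    (a b c d g : L)
    (hab : ⁅a, b⁆ = c) (hac : ⁅a, c⁆ = d) (had : ⁅a, d⁆ = g) (hbc : ⁅b, c⁆ = -g)
    (hag : ⁅a, g⁆ = 0) (hbd : ⁅b, d⁆ = 0) (hbg : ⁅b, g⁆ = 0) (hcd : ⁅c, d⁆ = 0) (hcg : ⁅c, g⁆ = 0) (hdg : ⁅d, g⁆ = 0)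
    (u : ℕ) (hu : 1 ≤ u) :
    (ι K a : UniversalEnvelopingAlgebra K L) ^ (1) * (ι K b : UniversalEnvelopingAlgebra K L) ^ (u) =
      (ι K b : UniversalEnvelopingAlgebra K L) ^ (u) * (ι K a : UniversalEnvelopingAlgebra K L) ^ (1)
      + ((u : K)) • ((ι K c : UniversalEnvelopingAlgebra K L) ^ (1) * (ι K b : UniversalEnvelopingAlgebra K L) ^ (u - 1))
      - ((u.choose 2 : ℕ) : K) • ((ι K g : UniversalEnvelopingAlgebra K L) ^ (1) * (ι K b : UniversalEnvelopingAlgebra K L) ^ (u - 2)) :=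
  stmt_7_general a b c g hab hbc hbg u
end

section
/- Let L be a Lie algebra over a field of characteristic zero with elements x_1, x_2, x_3, x_4 such that [x_4,x_2] = -x_1 and [x_4,x_3] = -x_2, and all other brackets among x_1, x_2, x_3, x_4 are 0 (the Lie algebra 𝔫_{4,1}). Then for all nonnegative integers j, k, l, m, n, p, q, r, in the universal enveloping algebra U(L) one has (x_1^j x_2^k x_3^l x_4^m)(x_1^n x_2^p x_3^q x_4^r) = \sum_{\alpha=0}^{\min\{m,p\}} \sum_{\beta_1,\beta_2 \ge 0,\ \beta_1+\beta_2 \le q,\ \beta_1+2\beta_2 \le m-\alpha} \binom{m}{\alpha} \binom{p}{\alpha} \binom{q}{\beta_1+\beta_2} \binom{m-\alpha}{\beta_1+2\beta_2} \binom{\beta_1+\beta_2}{\beta_1} \alpha! \frac{(\beta_1+2\beta_2)!}{2^{\beta_2}} (-1)^{\alpha+\beta_1} \, x_1^{j+n+\alpha+\beta_2} x_2^{k+p-\alpha+\beta_1} x_3^{l+q-\beta_1-\beta_2} x_4^{m+r-\alpha-\beta_1-2\beta_2}. -/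
/-!
Write a normally ordered element as `Σ s_l d^l` with coefficients `s_l` in a commutative algebra
`S` (for 𝔫_{4,1}: the subalgebra generated by `x₁, x₂, x₃`, with `d = x₄`), i.e. as the polynomial
`Σ s_l X^l ∈ S[X]` evaluated at `d` with coefficients on the left. The relations
`[d, x₂] = -x₁`, `[d, x₃] = -x₂` say that right multiplication by `x₂` and `x₃` acts on these
polynomials as the differential operators `x₂ - x₁ ∂` and `x₃ - x₂ ∂ + (x₁ / 2) ∂²`. Both are sums
of pairwise commuting operators, so their powers expand by the binomial and trinomial theorems,
and `∂ᵏ Xᵐ = m (m - 1) ⋯ (m - k + 1) X^(m - k)` produces the coefficients of the formula.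
-/

open Polynomial Finset UniversalEnvelopingAlgebra

theorem Finset.sum_range_sum_range_succ_eq_sum_ite {M : Type*} [AddCommMonoid M]
    (f : ℕ → ℕ → M) (q : ℕ) :
    ∑ s ∈ range (q + 1), ∑ i ∈ range (s + 1), f s i =
      ∑ i ∈ range (q + 1), ∑ j ∈ range (q + 1), if i + j ≤ q then f (i + j) i else 0 := by
  rw [sum_sigma', ← sum_product', ← sum_filter]
  refine sum_nbij' (fun x => (x.2, x.1 - x.2)) (fun y => ⟨y.1 + y.2, y.1⟩) ?_ ?_ ?_ ?_ ?_
  · rintro ⟨s, i⟩ h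
    simp only [mem_sigma, mem_filter, mem_product, mem_range] at h ⊢
    omega
  · rintro ⟨i, j⟩ h
    simp only [mem_sigma, mem_filter, mem_product, mem_range] at h ⊢
    omega
  · rintro ⟨s, i⟩ h
    simp only [mem_sigma, mem_range] at h
    simp only [Sigma.mk.injEq, heq_eq_eq, and_true]
    omega
  · rintro ⟨i, j⟩ -
    simp
  · rintro ⟨s, i⟩ h
    simp only [mem_sigma, mem_range] at h
    simp only [show i + (s - i) = s by omega]

theorem Commute.add_add_pow {R : Type*} [Semiring R] {x y z : R} (hxy : Commute x y)
    (hxz : Commute x z) (hyz : Commute y z) (q : ℕ) :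
    (x + y + z) ^ q = ∑ i ∈ range (q + 1), ∑ j ∈ range (q + 1),
      if i + j ≤ q then (q.choose (i + j) * (i + j).choose i) • (x ^ (q - i - j) * y ^ i * z ^ j)
      else 0 := by
  rw [add_assoc, add_comm, ((hxy.add_right hxz).symm).add_pow]
  simp only [hyz.add_pow, sum_mul]
  rw [sum_range_sum_range_succ_eq_sum_ite]
  refine sum_congr rfl fun i _ => sum_congr rfl fun j _ => ?_
  split_ifs
  · rw [Nat.add_sub_cancel_left, Nat.sub_sub, ← nsmul_eq_mul', ← nsmul_eq_mul' (y ^ i * z ^ j),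
      smul_mul_assoc, smul_smul, ((hxy.pow_pow _ _).mul_right (hxz.pow_pow _ _)).symm.eq,
      mul_assoc]
  · rfl

section Operators

variable {S : Type*} [CommRing S]

local notation "∂" => (derivative : Module.End S S[X])
local notation "μ" => algebraMap S (Module.End S S[X])

noncomputable def mulRightOp₂ (a b : S) : Module.End S S[X] :=
  μ b + μ (-a) * ∂

noncomputable def mulRightOp₃ (h b c : S) : Module.End S S[X] :=
  μ c + μ (-b) * ∂ + μ h * ∂ ^ 2

theorem mulRightOp₂_apply (a b : S) (P : S[X]) :
    mulRightOp₂ a b P = b • P - a • derivative P := by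
  simp [mulRightOp₂, sub_eq_add_neg]

theorem mulRightOp₃_apply (h b c : S) (P : S[X]) :
    mulRightOp₃ h b c P = c • P - b • derivative P + h • derivative (derivative P) := by
  simp [mulRightOp₃, sub_eq_add_neg, pow_two]

theorem mulRightOp₂_mul_X (a b : S) (P : S[X]) :
    mulRightOp₂ a b (P * X) = mulRightOp₂ a b P * X - a • P := by
  simp only [mulRightOp₂_apply, derivative_mul, derivative_X, mul_one, smul_add, smul_mul_assoc,
    sub_mul]
  abel

theorem mulRightOp₃_mul_X {a h : S} (h2 : 2 * h = a) (b c : S) (P : S[X]) :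
    mulRightOp₃ h b c (P * X) = mulRightOp₃ h b c P * X - mulRightOp₂ a b P := by
  simp only [mulRightOp₃_apply, mulRightOp₂_apply, derivative_mul, derivative_X, mul_one,
    derivative_add, smul_add, smul_mul_assoc, sub_mul, add_mul, ← h2, mul_smul, two_smul]
  abel

theorem algebraMap_mul_derivative_pow_pow (s : S) (k n : ℕ) :
    (μ s * ∂ ^ k) ^ n = μ (s ^ n) * ∂ ^ (k * n) := by
  rw [(Algebra.commute_algebraMap_left _ _).mul_pow, ← map_pow, ← pow_mul]

theorem algebraMap_mul_derivative_pow_mul (s t : S) (i j : ℕ) :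
    μ s * ∂ ^ i * (μ t * ∂ ^ j) = μ (s * t) * ∂ ^ (i + j) := by
  rw [mul_assoc, ← mul_assoc (∂ ^ i), ← (Algebra.commutes t (∂ ^ i)), mul_assoc, ← pow_add,
    ← mul_assoc, ← map_mul]

theorem algebraMap_mul_derivative_pow_apply_X_pow (s : S) (k m : ℕ) :
    (μ s * ∂ ^ k) (X ^ m) = (s * (m.descFactorial k : S)) • X ^ (m - k) := by
  rw [Module.End.mul_apply, Module.End.pow_apply, iterate_derivative_X_pow_eq_smul,
    Module.algebraMap_end_apply, smul_smul]

theorem mulRightOp₂_pow_apply_X_pow (a b : S) (p m : ℕ) :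
    (mulRightOp₂ a b ^ p) (X ^ m) = ∑ α ∈ range (p + 1),
      ((-1) ^ α * p.choose α * m.descFactorial α * a ^ α * b ^ (p - α) : S) • X ^ (m - α) := by
  have hsplit : mulRightOp₂ a b = μ (-a) * ∂ ^ 1 + μ b := by
    rw [mulRightOp₂, pow_one, add_comm]
  rw [hsplit, (Algebra.commute_algebraMap_right _ _).add_pow, LinearMap.sum_apply]
  refine sum_congr rfl fun α _ => ?_
  rw [Module.End.mul_apply, Module.End.natCast_apply, Module.End.mul_apply, ← map_pow,
    Module.algebraMap_end_apply, map_smul, map_nsmul, algebraMap_mul_derivative_pow_pow,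
    algebraMap_mul_derivative_pow_apply_X_pow, one_mul, ← Nat.cast_smul_eq_nsmul S, smul_smul,
    smul_smul]
  congr 1
  ring

theorem mulRightOp₃_pow_apply_X_pow (h b c : S) (q M : ℕ) :
    (mulRightOp₃ h b c ^ q) (X ^ M) = ∑ β₁ ∈ range (q + 1), ∑ β₂ ∈ range (q + 1),
      if β₁ + β₂ ≤ q then
        ((-1) ^ β₁ * (q.choose (β₁ + β₂) * (β₁ + β₂).choose β₁ : ℕ) * M.descFactorial (β₁ + 2 * β₂)
          * h ^ β₂ * b ^ β₁ * c ^ (q - β₁ - β₂) : S) • X ^ (M - (β₁ + 2 * β₂))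
      else 0 := by
  have hsplit : mulRightOp₃ h b c = μ c + μ (-b) * ∂ ^ 1 + μ h * ∂ ^ 2 := by
    rw [mulRightOp₃, pow_one]
  have hyz : Commute (μ (-b) * ∂ ^ 1) (μ h * ∂ ^ 2) := by
    rw [Commute, SemiconjBy, algebraMap_mul_derivative_pow_mul, algebraMap_mul_derivative_pow_mul,
      mul_comm, add_comm]
  rw [hsplit, (Algebra.commute_algebraMap_left _ _).add_add_pow
    (Algebra.commute_algebraMap_left _ _) hyz, LinearMap.sum_apply]
  refine sum_congr rfl fun β₁ _ => ?_
  rw [LinearMap.sum_apply]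
  refine sum_congr rfl fun β₂ _ => ?_
  split_ifs
  · rw [LinearMap.smul_apply, mul_assoc, Module.End.mul_apply, ← map_pow,
      Module.algebraMap_end_apply, algebraMap_mul_derivative_pow_pow,
      algebraMap_mul_derivative_pow_pow, algebraMap_mul_derivative_pow_mul,
      algebraMap_mul_derivative_pow_apply_X_pow, one_mul, ← Nat.cast_smul_eq_nsmul S, smul_smul,
      smul_smul]
    congr 1
    ring
  · rfl

end Operators

section Intertwining

variable {S A : Type*} [CommRing S] [Ring A]

def IntertwinesMulRight (ι : S →+* A) (d : A) (θ : Module.End S S[X]) (y : A) : Prop :=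
  ∀ P : S[X], P.eval₂ ι d * y = (θ P).eval₂ ι d

variable {ι : S →+* A} {d : A}

namespace IntertwinesMulRight

theorem of_forall_X_pow {θ : Module.End S S[X]} {y : A}
    (h : ∀ l : ℕ, d ^ l * y = (θ (X ^ l)).eval₂ ι d) : IntertwinesMulRight ι d θ y := by
  intro P
  induction P using Polynomial.induction_on' with
  | add P Q hP hQ => rw [eval₂_add, add_mul, hP, hQ, map_add, eval₂_add]
  | monomial l s =>
    rw [← smul_X_eq_monomial, eval₂_smul, eval₂_X_pow, mul_assoc, h, map_smul, eval₂_smul]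

theorem of_commutator {θ θ' : Module.End S S[X]} {y z : A}
    (hz : IntertwinesMulRight ι d θ' z) (hdy : d * y = y * d - z)
    (h1 : (θ 1).eval₂ ι d = y) (hX : ∀ P, θ (P * X) = θ P * X - θ' P) :
    IntertwinesMulRight ι d θ y := by
  refine of_forall_X_pow fun l => ?_
  induction l with
  | zero => rw [pow_zero, one_mul, pow_zero, h1]
  | succ l ih =>
    rw [pow_succ, mul_assoc, hdy, mul_sub, ← mul_assoc, ih, pow_succ, hX, eval₂_sub,
      eval₂_mul_X, ← hz, eval₂_X_pow]

theorem mul {θ θ' : Module.End S S[X]} {y y' : A} (h : IntertwinesMulRight ι d θ y)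
    (h' : IntertwinesMulRight ι d θ' y') : IntertwinesMulRight ι d (θ' * θ) (y * y') := by
  intro P
  rw [← mul_assoc, h, h', Module.End.mul_apply]

theorem pow {θ : Module.End S S[X]} {y : A} (h : IntertwinesMulRight ι d θ y) (n : ℕ) :
    IntertwinesMulRight ι d (θ ^ n) (y ^ n) := by
  induction n with
  | zero => intro P; simp
  | succ n ih => rw [pow_succ', pow_succ]; exact ih.mul h

theorem pow_mul_eq {θ : Module.End S S[X]} {y : A} (h : IntertwinesMulRight ι d θ y) (m : ℕ) :
    d ^ m * y = (θ (X ^ m)).eval₂ ι d := by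
  rw [← h, eval₂_X_pow]

end IntertwinesMulRight

theorem intertwinesMulRight_algebraMap {a : S} (ha : Commute (ι a) d) :
    IntertwinesMulRight ι d (algebraMap S (Module.End S S[X]) a) (ι a) :=
  .of_forall_X_pow fun l => by
    rw [← (ha.pow_right l).eq, Module.algebraMap_end_apply, eval₂_smul, eval₂_X_pow]

theorem intertwinesMulRight_mulRightOp₂ {a b : S} (ha : Commute (ι a) d)
    (hb : d * ι b = ι b * d - ι a) : IntertwinesMulRight ι d (mulRightOp₂ a b) (ι b) :=
  .of_commutator (intertwinesMulRight_algebraMap ha) hb (by simp [mulRightOp₂_apply])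
    (mulRightOp₂_mul_X a b)

theorem intertwinesMulRight_mulRightOp₃ {a b c h : S} (h2 : 2 * h = a) (ha : Commute (ι a) d)
    (hb : d * ι b = ι b * d - ι a) (hc : d * ι c = ι c * d - ι b) :
    IntertwinesMulRight ι d (mulRightOp₃ h b c) (ι c) :=
  .of_commutator (intertwinesMulRight_mulRightOp₂ ha hb) hc (by simp [mulRightOp₃_apply])
    (mulRightOp₃_mul_X h2 b c)

theorem pow_mul_monomial_eq_sum {a b c h : S} (h2 : 2 * h = a) (ha : Commute (ι a) d)
    (hb : d * ι b = ι b * d - ι a) (hc : d * ι c = ι c * d - ι b) (m n p q : ℕ) :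
    d ^ m * (ι a ^ n * ι b ^ p * ι c ^ q) =
      ∑ α ∈ range (p + 1), ∑ β₁ ∈ range (q + 1), ∑ β₂ ∈ range (q + 1),
        if β₁ + β₂ ≤ q then
          ι (a ^ n * ((-1) ^ α * p.choose α * m.descFactorial α * a ^ α * b ^ (p - α)) *
            ((-1) ^ β₁ * (q.choose (β₁ + β₂) * (β₁ + β₂).choose β₁ : ℕ)
              * (m - α).descFactorial (β₁ + 2 * β₂) * h ^ β₂ * b ^ β₁ * c ^ (q - β₁ - β₂)))
            * d ^ (m - α - (β₁ + 2 * β₂))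
        else 0 := by
  have hΘ := (((intertwinesMulRight_algebraMap ha).pow n).mul
      ((intertwinesMulRight_mulRightOp₂ ha hb).pow p)).mul
      ((intertwinesMulRight_mulRightOp₃ h2 ha hb hc).pow q)
  rw [hΘ.pow_mul_eq, Module.End.mul_apply, Module.End.mul_apply, ← map_pow,
    Module.algebraMap_end_apply, map_smul, mulRightOp₂_pow_apply_X_pow, smul_sum, map_sum]
  simp only [map_smul, mulRightOp₃_pow_apply_X_pow, smul_sum, smul_ite, smul_zero,
    eval₂_finsetSum, apply_ite (eval₂ ι d), eval₂_zero, eval₂_smul, eval₂_X_pow, smul_smul,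
    map_mul, mul_assoc]

end Intertwining

namespace UniversalEnvelopingAlgebra

variable {K L : Type*} [CommRing K] [LieRing L] [LieAlgebra K L]

theorem ι_lie (u v : L) :
    (ι K ⁅u, v⁆ : UniversalEnvelopingAlgebra K L) = ι K u * ι K v - ι K v * ι K u := by
  -- `ι` is a Lie hom for the commutator bracket, which Mathlib only provides as a local instance
  let _ : LieRing (UniversalEnvelopingAlgebra K L) := LieRing.ofAssociativeRing
  exact (ι K).map_lie u v

theorem commute_ι_of_lie_eq_zero_s10 {u v : L} (h : ⁅u, v⁆ = 0) :
    Commute (ι K u : UniversalEnvelopingAlgebra K L) (ι K v) :=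
  sub_eq_zero.1 (by rw [← ι_lie, h, map_zero])

theorem ι_mul_ι_of_lie_eq_neg {u v w : L} (h : ⁅u, v⁆ = -w) :
    (ι K u : UniversalEnvelopingAlgebra K L) * ι K v = ι K v * ι K u - ι K w := by
  have h' := ι_lie (K := K) u v
  rw [h, map_neg] at h'
  rw [eq_sub_iff_add_eq, ← neg_neg (ι K w), h']
  abel

end UniversalEnvelopingAlgebra

section Ordered

variable {K A : Type*} [Field K] [CharZero K] [Ring A] [Algebra K A]

theorem ordered_mul_ordered_eq_sum_of_algHom {S : Type*} [CommRing S] [Algebra K S]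
    (ι : S →ₐ[K] A) (a b c : S) (d : A)
    (ha : Commute (ι a) d) (hb : d * ι b = ι b * d - ι a) (hc : d * ι c = ι c * d - ι b)
    (j k l m n p q r : ℕ) :
    (ι a ^ j * ι b ^ k * ι c ^ l * d ^ m) * (ι a ^ n * ι b ^ p * ι c ^ q * d ^ r) =
      ∑ α ∈ range (min m p + 1), ∑ β1 ∈ range (q + 1), ∑ β2 ∈ range (q + 1),
        if β1 + β2 ≤ q ∧ β1 + 2 * β2 ≤ m - α then
          ((-1 : K) ^ (α + β1) *
            ((m.choose α * p.choose α * q.choose (β1 + β2) * (m - α).choose (β1 + 2 * β2)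
              * (β1 + β2).choose β1 * α.factorial * (β1 + 2 * β2).factorial : ℕ) : K)
            / 2 ^ β2) •
            (ι a ^ (j + n + α + β2) * ι b ^ (k + p - α + β1)
              * ι c ^ (l + q - β1 - β2) * d ^ (m + r - α - β1 - 2 * β2))
        else 0 := by
  have h2 : 2 * ((2⁻¹ : K) • a) = a := by
    rw [mul_smul_comm, two_mul, ← two_smul K, smul_smul, inv_mul_cancel₀ two_ne_zero, one_smul]
  have hL : (ι a ^ j * ι b ^ k * ι c ^ l * d ^ m) * (ι a ^ n * ι b ^ p * ι c ^ q * d ^ r) =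
      ι (a ^ j * b ^ k * c ^ l) * (d ^ m * (ι a ^ n * ι b ^ p * ι c ^ q)) * d ^ r := by
    simp only [map_mul, map_pow, mul_assoc]
  have hd := pow_mul_monomial_eq_sum (ι := (ι : S →+* A)) h2 ha hb hc m n p q
  simp only [RingHom.coe_coe] at hd
  rw [hL, hd]
  simp only [mul_sum, sum_mul, mul_ite, ite_mul, mul_zero, zero_mul]
  rw [← sum_subset (range_subset_range.2 (by omega : min m p + 1 ≤ p + 1))]
  · refine sum_congr rfl fun α hα => sum_congr rfl fun β₁ _ => sum_congr rfl fun β₂ _ => ?_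
    rw [mem_range, Nat.lt_succ_iff, le_min_iff] at hα
    by_cases hq : β₁ + β₂ ≤ q
    · by_cases hm : β₁ + 2 * β₂ ≤ m - α
      · rw [if_pos hq, if_pos ⟨hq, hm⟩, show k + p - α + β₁ = k + (p - α) + β₁ by omega,
          show l + q - β₁ - β₂ = l + (q - β₁ - β₂) by omega,
          show m + r - α - β₁ - 2 * β₂ = m - α - (β₁ + 2 * β₂) + r by omega, pow_add d,
          ← map_pow, ← map_pow, ← map_pow, ← map_mul, ← map_mul, ← smul_mul_assoc, ← map_smul]
        simp only [← mul_assoc, ← map_mul]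
        congr 3
        rw [Nat.descFactorial_eq_factorial_mul_choose, Nat.descFactorial_eq_factorial_mul_choose,
          Algebra.smul_def, Algebra.smul_def, mul_pow, div_eq_mul_inv, ← inv_pow]
        simp only [map_mul, map_pow, map_neg, map_one, map_natCast, Nat.cast_mul]
        ring
      · rw [if_pos hq, if_neg (fun h => hm h.2),
          Nat.descFactorial_eq_zero_iff_lt.2 (by omega : m - α < β₁ + 2 * β₂)]
        simp
    · rw [if_neg hq, if_neg (fun h => hq h.1)]
  · intro α hαp hα
    rw [mem_range] at hαp hα
    rw [Nat.descFactorial_eq_zero_iff_lt.2 (by omega : m < α)]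
    simp

open scoped IsMulCommutative in
theorem ordered_mul_ordered_eq_sum {a b c d : A} (hab : Commute a b) (hac : Commute a c)
    (had : Commute a d) (hbc : Commute b c) (hdb : d * b = b * d - a) (hdc : d * c = c * d - b)
    (j k l m n p q r : ℕ) :
    (a ^ j * b ^ k * c ^ l * d ^ m) * (a ^ n * b ^ p * c ^ q * d ^ r) =
      ∑ α ∈ range (min m p + 1), ∑ β1 ∈ range (q + 1), ∑ β2 ∈ range (q + 1),
        if β1 + β2 ≤ q ∧ β1 + 2 * β2 ≤ m - α then
          ((-1 : K) ^ (α + β1) *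
            ((m.choose α * p.choose α * q.choose (β1 + β2) * (m - α).choose (β1 + 2 * β2)
              * (β1 + β2).choose β1 * α.factorial * (β1 + 2 * β2).factorial : ℕ) : K)
            / 2 ^ β2) •
            (a ^ (j + n + α + β2) * b ^ (k + p - α + β1)
              * c ^ (l + q - β1 - β2) * d ^ (m + r - α - β1 - 2 * β2))
        else 0 := by
  have hcomm : ∀ x ∈ ({a, b, c} : Set A), ∀ y ∈ ({a, b, c} : Set A), x * y = y * x := by
    simp only [Set.mem_insert_iff, Set.mem_singleton_iff]
    rintro x (rfl | rfl | rfl) y (rfl | rfl | rfl) <;> simp only [hab.eq, hac.eq, hbc.eq]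
  have := Algebra.isMulCommutative_adjoin K hcomm
  exact ordered_mul_ordered_eq_sum_of_algHom (Algebra.adjoin K {a, b, c}).val
    ⟨a, Algebra.subset_adjoin (by simp)⟩ ⟨b, Algebra.subset_adjoin (by simp)⟩
    ⟨c, Algebra.subset_adjoin (by simp)⟩ d had hdb hdc j k l m n p q r

end Ordered

theorem stmt_10 {K : Type*} [Field K] [CharZero K]
    {L : Type*} [LieRing L] [LieAlgebra K L]
    (x1 x2 x3 x4 : L)
    (h42 : ⁅x4, x2⁆ = -x1) (h43 : ⁅x4, x3⁆ = -x2)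
    (h12 : ⁅x1, x2⁆ = 0) (h13 : ⁅x1, x3⁆ = 0) (h14 : ⁅x1, x4⁆ = 0) (h23 : ⁅x2, x3⁆ = 0)
    (j k l m n p q r : ℕ) :
    ((ι K x1 : UniversalEnvelopingAlgebra K L) ^ (j) * (ι K x2 : UniversalEnvelopingAlgebra K L) ^ (k) * (ι K x3 : UniversalEnvelopingAlgebra K L) ^ (l) * (ι K x4 : UniversalEnvelopingAlgebra K L) ^ (m))
      * ((ι K x1 : UniversalEnvelopingAlgebra K L) ^ (n) * (ι K x2 : UniversalEnvelopingAlgebra K L) ^ (p) * (ι K x3 : UniversalEnvelopingAlgebra K L) ^ (q) * (ι K x4 : UniversalEnvelopingAlgebra K L) ^ (r)) =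
      ∑ α ∈ Finset.range (min m p + 1),
      ∑ β1 ∈ Finset.range (q + 1), ∑ β2 ∈ Finset.range (q + 1),
        if β1 + β2 ≤ q ∧ β1 + 2 * β2 ≤ m - α then
          ((-1 : K) ^ (α + β1) *
            ((m.choose α * p.choose α * q.choose (β1 + β2) * (m - α).choose (β1 + 2 * β2)
              * (β1 + β2).choose β1 * α.factorial * (β1 + 2 * β2).factorial : ℕ) : K)
            / 2 ^ β2) •
            ((ι K x1 : UniversalEnvelopingAlgebra K L) ^ (j + n + α + β2) * (ι K x2 : UniversalEnvelopingAlgebra K L) ^ (k + p - α + β1)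
              * (ι K x3 : UniversalEnvelopingAlgebra K L) ^ (l + q - β1 - β2) * (ι K x4 : UniversalEnvelopingAlgebra K L) ^ (m + r - α - β1 - 2 * β2))
        else 0 :=
  ordered_mul_ordered_eq_sum (commute_ι_of_lie_eq_zero_s10 h12) (commute_ι_of_lie_eq_zero_s10 h13)
    (commute_ι_of_lie_eq_zero_s10 h14) (commute_ι_of_lie_eq_zero_s10 h23) (ι_mul_ι_of_lie_eq_neg h42)
    (ι_mul_ι_of_lie_eq_neg h43) j k l m n p q r
end

section
/- Let L be a Lie algebra over a field of characteristic zero with elements x_1, x_2, x_3, x_4, x_5 such that [x_5,x_2] = -x_1, [x_5,x_3] = -x_2, and [x_5,x_4] = -x_3, and all other brackets among x_1, ..., x_5 are 0 (the Lie algebra 𝔫_{5,5}). Then for all nonnegative integers j, k, l, m, n, p, q, r, s, t, in the universal enveloping algebra U(L) one has (x_1^j x_2^k x_3^l x_4^m x_5^n)(x_1^p x_2^q x_3^r x_4^s x_5^t) = \sum_{\alpha=0}^{\min\{n,q\}} \sum_{\beta_1,\beta_2 \ge 0,\ \beta_1+\beta_2 \le r,\ \beta_1+2\beta_2 \le n-\alpha}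 \sum_{\gamma_1,\gamma_2,\gamma_3 \ge 0,\ \gamma_1+\gamma_2+\gamma_3 \le s,\ \gamma_1+2\gamma_2+3\gamma_3 \le n-\alpha-\beta_1-2\beta_2} \binom{n}{\alpha} \binom{q}{\alpha} \binom{r}{\beta_1+\beta_2} \binom{n-\alpha}{\beta_1+2\beta_2} \binom{\beta_1+\beta_2}{\beta_1} \binom{s}{\gamma_1+\gamma_2+\gamma_3} \binom{n-\alpha-\beta_1-2\beta_2}{\gamma_1+2\gamma_2+3\gamma_3} \alpha! \frac{(\beta_1+2\beta_2)!}{2^{\beta_2}} \frac{(\gamma_1+\gamma_2+\gamma_3)!\,(\gamma_1+2\gamma_2+3\gamma_3)!}{(2!)^{\gamma_2}(3!)^{\gamma_3}\, \gamma_3!\, \gamma_2!\, \gamma_1!} (-1)^{\alpha+\beta_1+\gamma_1+\gamma_3} \, x_1^{j+p+\alpha+\beta_2+\gamma_3} x_2^{k+q-\alpha+\beta_1+\gamma_2} x_3^{l+r-\beta_1-\beta_2+\gamma_1} x_4^{m+s-\gamma_1-\gamma_2-\gamma_3} x_5^{n+t-\alpha-\beta_1-2\beta_2-\gamma_1-2\gamma_2-3\gamma_3}.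 -/
/-!
Write `a, b, c, d, e` for the images of `x₁, …, x₅`. In `U(L)` the elements `a, b, c, d` commute
and `ad e` is a derivation with `d ↦ -c`, `c ↦ -b`, `b ↦ -a`, `a ↦ 0`. Hence moving `e ^ n`
to the right across `d ^ s` produces the monomials
`a ^ γ₃ b ^ γ₂ c ^ γ₁ d ^ (s - γ₁ - γ₂ - γ₃) e ^ (n - w)`, `w = γ₁ + 2γ₂ + 3γ₃`; their
coefficients `n (n - 1) ⋯ (n - w + 1) · chainCoeff s γ` are found by induction on `n`, because
they satisfy Pascal's rule in `n`. Collapsing the chain to `(0, 0, a, b)` and `(0, a, b, c)`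
gives the expansions of `e ^ n b ^ q` and `e ^ n c ^ r`, and the product of two ordered
monomials is obtained by moving `e ^ n` across `b ^ q`, then `c ^ r`, then `d ^ s`.
-/

open Finset

namespace Filiform

theorem sum_range_eq_sum_range_succ {M : Type*} [AddCommMonoid M] {N : ℕ} {f : ℕ → M}
    (h0 : f 0 = 0) (hN : f N = 0) : ∑ i ∈ range N, f i = ∑ i ∈ range N, f (i + 1) := by
  rw [← add_zero (∑ i ∈ range N, f i), ← hN, ← sum_range_succ, sum_range_succ', h0, add_zero]

theorem succ_descFactorial_eq_add (n w : ℕ) :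
    (n + 1).descFactorial w = n.descFactorial w + w * n.descFactorial (w - 1) := by
  rcases w with _ | w
  · simp
  rcases le_or_gt w n with h | h
  · rw [Nat.succ_descFactorial_succ, Nat.descFactorial_succ, Nat.add_sub_cancel,
      show n + 1 = n - w + (w + 1) by omega, Nat.add_mul]
  · rw [Nat.descFactorial_eq_zero_iff_lt.2 (by omega : n + 1 < w + 1),
      Nat.descFactorial_eq_zero_iff_lt.2 (by omega : n < w + 1),
      Nat.descFactorial_eq_zero_iff_lt.2 (by omega : n < w + 1 - 1), mul_zero, add_zero]

def cubeSum {M : Type*} [AddCommMonoid M] (N : ℕ) (f : ℕ → ℕ → ℕ → M) : M :=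
  ∑ i ∈ range N, ∑ j ∈ range N, ∑ k ∈ range N, f i j k

section CubeSum

variable {M : Type*} [AddCommGroup M] {N : ℕ}

theorem cubeSum_add (f g : ℕ → ℕ → ℕ → M) :
    cubeSum N (fun i j k => f i j k + g i j k) = cubeSum N f + cubeSum N g := by
  simp only [cubeSum, sum_add_distrib]

theorem cubeSum_sub (f g : ℕ → ℕ → ℕ → M) :
    cubeSum N (fun i j k => f i j k - g i j k) = cubeSum N f - cubeSum N g := by
  simp only [cubeSum, sum_sub_distrib]

theorem cubeSum_neg (f : ℕ → ℕ → ℕ → M) :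
    (cubeSum N fun i j k => -f i j k) = -cubeSum N f := by
  simp only [cubeSum, sum_neg_distrib]

theorem mul_cubeSum {R : Type*} [Ring R] (x : R) (f : ℕ → ℕ → ℕ → R) :
    x * cubeSum N f = cubeSum N fun i j k => x * f i j k := by
  simp only [cubeSum, mul_sum]

theorem cubeSum_eq_apply_zero {f : ℕ → ℕ → ℕ → M}
    (hf : ∀ i j k, i ≠ 0 ∨ j ≠ 0 ∨ k ≠ 0 → f i j k = 0) : cubeSum (N + 1) f = f 0 0 0 := by
  rw [cubeSum, sum_eq_single 0 (fun i _ hi => sum_eq_zero fun j _ => sum_eq_zero fun k _ =>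
      hf i j k (.inl hi)) (by simp),
    sum_eq_single 0 (fun j _ hj => sum_eq_zero fun k _ => hf 0 j k (.inr (.inl hj))) (by simp),
    sum_eq_single 0 (fun k _ hk => hf 0 0 k (.inr (.inr hk))) (by simp)]

theorem cubeSum_eq_sum_fst {f : ℕ → ℕ → ℕ → M} (hf : ∀ i j k, j ≠ 0 ∨ k ≠ 0 → f i j k = 0) :
    cubeSum (N + 1) f = ∑ i ∈ range (N + 1), f i 0 0 :=
  sum_congr rfl fun i _ => by
    rw [sum_eq_single 0 (fun j _ hj => sum_eq_zero fun k _ => hf i j k (.inl hj)) (by simp),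
      sum_eq_single 0 (fun k _ hk => hf i 0 k (.inr hk)) (by simp)]

theorem cubeSum_eq_sum_fst_snd {f : ℕ → ℕ → ℕ → M} (hf : ∀ i j k, k ≠ 0 → f i j k = 0) :
    cubeSum (N + 1) f = ∑ i ∈ range (N + 1), ∑ j ∈ range (N + 1), f i j 0 :=
  sum_congr rfl fun i _ => sum_congr rfl fun j _ =>
    sum_eq_single 0 (fun k _ => hf i j k) (by simp)

theorem cubeSum_shift_fst {f : ℕ → ℕ → ℕ → M} (h0 : ∀ j k, f 0 j k = 0)
    (hN : ∀ j k, f N j k = 0) : cubeSum N f = cubeSum N fun i j k => f (i + 1) j k :=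
  sum_range_eq_sum_range_succ (by simp [h0]) (by simp [hN])

theorem cubeSum_shift_snd {f : ℕ → ℕ → ℕ → M} (h0 : ∀ i k, f i 0 k = 0)
    (hN : ∀ i k, f i N k = 0) : cubeSum N f = cubeSum N fun i j k => f i (j + 1) k :=
  sum_congr rfl fun i _ => sum_range_eq_sum_range_succ (by simp [h0]) (by simp [hN])

theorem cubeSum_shift_thd {f : ℕ → ℕ → ℕ → M} (h0 : ∀ i j, f i j 0 = 0)
    (hN : ∀ i j, f i j N = 0) : cubeSum N f = cubeSum N fun i j k => f i j (k + 1) :=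
  sum_congr rfl fun i _ => sum_congr rfl fun j _ => sum_range_eq_sum_range_succ (h0 i j) (hN i j)

end CubeSum

section Ring

variable {A : Type*} [Ring A]

theorem mul_pow_succ_of_mul_eq_sub {e x y : A} (h : e * x = x * e - y) (hxy : Commute x y)
    (k : ℕ) : e * x ^ (k + 1) = x ^ (k + 1) * e - (k + 1) • (y * x ^ k) := by
  induction k with
  | zero => simpa using h
  | succ k ih =>
    rw [pow_succ x (k + 1), ← mul_assoc, ih, sub_mul, mul_assoc, h, smul_mul_assoc, mul_assoc y,
      ← pow_succ, mul_sub, ← mul_assoc, ← pow_succ, (hxy.pow_left (k + 1)).eq,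
      succ_nsmul _ (k + 1)]
    abel

theorem mul_pow_of_mul_eq_sub {e x y : A} (h : e * x = x * e - y) (hxy : Commute x y)
    (k : ℕ) : e * x ^ k = x ^ k * e - k • (y * x ^ (k - 1)) := by
  rcases k with _ | k
  · simp
  · exact mul_pow_succ_of_mul_eq_sub h hxy k

theorem mul_monomial {a b c d e : A} (hab : Commute a b) (hbc : Commute b c) (hcd : Commute c d)
    (hae : Commute a e) (heb : e * b = b * e - a) (hec : e * c = c * e - b)
    (hed : e * d = d * e - c) (i k l m : ℕ) :
    e * (a ^ i * b ^ k * c ^ l * d ^ m) = a ^ i * b ^ k * c ^ l * d ^ m * e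
      - k • (a ^ (i + 1) * b ^ (k - 1) * c ^ l * d ^ m)
      - l • (a ^ i * b ^ (k + 1) * c ^ (l - 1) * d ^ m)
      - m • (a ^ i * b ^ k * c ^ (l + 1) * d ^ (m - 1)) := by
  have hb := mul_pow_of_mul_eq_sub heb hab.symm k
  have hc := mul_pow_of_mul_eq_sub hec hbc.symm l
  have hd := mul_pow_of_mul_eq_sub hed hcd.symm m
  calc e * (a ^ i * b ^ k * c ^ l * d ^ m)
      = a ^ i * (e * b ^ k) * c ^ l * d ^ m := by
        rw [← mul_assoc, ← mul_assoc, ← mul_assoc, ← (hae.pow_left i).eq, mul_assoc _ e]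
    _ = a ^ i * b ^ k * (e * c ^ l) * d ^ m
          - k • (a ^ (i + 1) * b ^ (k - 1) * c ^ l * d ^ m) := by
        rw [hb]
        simp only [mul_sub, sub_mul, mul_smul_comm, smul_mul_assoc, mul_assoc, pow_succ]
    _ = _ := by
        rw [hc]
        simp only [mul_sub, sub_mul, mul_smul_comm, smul_mul_assoc, mul_assoc, pow_succ, hd]
        abel

theorem monomial_mul_monomial {a b c d : A} (hab : Commute a b) (hac : Commute a c)
    (had : Commute a d) (hbc : Commute b c) (hbd : Commute b d) (hcd : Commute c d)
    (i k l m i' k' l' m' : ℕ) :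
    a ^ i * b ^ k * c ^ l * d ^ m * (a ^ i' * b ^ k' * c ^ l' * d ^ m') =
      a ^ (i + i') * b ^ (k + k') * c ^ (l + l') * d ^ (m + m') := by
  rw [(((had.pow_pow i' m).mul_left (hbd.pow_pow k' m)).mul_left
      (hcd.pow_pow l' m)).symm.mul_mul_mul_comm,
    ((hac.pow_pow i' l).mul_left (hbc.pow_pow k' l)).symm.mul_mul_mul_comm,
    (hab.pow_pow i' k).symm.mul_mul_mul_comm, pow_add, pow_add, pow_add, pow_add]

end Ring

section Coeff

variable (K : Type*) [Field K]

/-- The coefficient of `a ^ γ₃ * b ^ γ₂ * c ^ γ₁ * d ^ (s - γ₁ - γ₂ - γ₃)` in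
`(d - c + b / 2! - a / 3!) ^ s = exp (ad e) (d ^ s)`. -/
noncomputable def chainCoeff (s γ₁ γ₂ γ₃ : ℕ) : K :=
  (-1) ^ (γ₁ + γ₃) * (s.descFactorial (γ₁ + γ₂ + γ₃) : K) /
    (2 ^ γ₂ * 6 ^ γ₃ * γ₁.factorial * γ₂.factorial * γ₃.factorial)

variable {K}

theorem chainCoeff_eq_zero {s γ₁ γ₂ γ₃ : ℕ} (h : s < γ₁ + γ₂ + γ₃) :
    chainCoeff K s γ₁ γ₂ γ₃ = 0 := by
  simp [chainCoeff, Nat.descFactorial_eq_zero_iff_lt.2 h]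

theorem descFactorial_mul_chainCoeff_eq_zero {n s γ₁ γ₂ γ₃ : ℕ}
    (h : ¬(γ₁ + γ₂ + γ₃ ≤ s ∧ γ₁ + 2 * γ₂ + 3 * γ₃ ≤ n)) :
    (n.descFactorial (γ₁ + 2 * γ₂ + 3 * γ₃) : K) * chainCoeff K s γ₁ γ₂ γ₃ = 0 := by
  rcases not_and_or.1 h with h | h
  · rw [chainCoeff_eq_zero (by omega), mul_zero]
  · rw [Nat.descFactorial_eq_zero_iff_lt.2 (by omega), Nat.cast_zero, zero_mul]

variable [CharZero K]

theorem succ_mul_chainCoeff_succ_fst (n s i j k : ℕ) :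
    ((i + 1 : ℕ) : K) *
        (n.descFactorial (i + 1 + 2 * j + 3 * k - 1) * chainCoeff K s (i + 1) j k) =
      -(((s - (i + j + k) : ℕ) : K) *
        (n.descFactorial (i + 2 * j + 3 * k) * chainCoeff K s i j k)) := by
  rw [chainCoeff, chainCoeff, show i + 1 + 2 * j + 3 * k - 1 = i + 2 * j + 3 * k by omega,
    show i + 1 + j + k = i + j + k + 1 by ring, Nat.descFactorial_succ, Nat.factorial_succ]
  push_cast
  field_simp
  ring

theorem succ_mul_chainCoeff_succ_snd (n s i j k : ℕ) :
    ((j + 1 : ℕ) : K) *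
        (2 * n.descFactorial (i + 2 * (j + 1) + 3 * k - 1) * chainCoeff K s i (j + 1) k) =
      -(((i + 1 : ℕ) : K) *
        (n.descFactorial (i + 1 + 2 * j + 3 * k) * chainCoeff K s (i + 1) j k)) := by
  rw [chainCoeff, chainCoeff, show i + 2 * (j + 1) + 3 * k - 1 = i + 1 + 2 * j + 3 * k by omega,
    show i + 1 + j + k = i + (j + 1) + k by ring, Nat.factorial_succ, Nat.factorial_succ]
  push_cast
  field_simp
  ring

theorem succ_mul_chainCoeff_succ_thd (n s i j k : ℕ) :
    ((k + 1 : ℕ) : K) *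
        (3 * n.descFactorial (i + 2 * j + 3 * (k + 1) - 1) * chainCoeff K s i j (k + 1)) =
      -(((j + 1 : ℕ) : K) *
        (n.descFactorial (i + 2 * (j + 1) + 3 * k) * chainCoeff K s i (j + 1) k)) := by
  rw [chainCoeff, chainCoeff, show i + 2 * j + 3 * (k + 1) - 1 = i + 2 * (j + 1) + 3 * k by omega,
    show i + (j + 1) + k = i + j + (k + 1) by ring, Nat.factorial_succ, Nat.factorial_succ]
  push_cast
  field_simp
  ring

theorem cubeSum_succ_descFactorial_smul {M : Type*} [AddCommGroup M] [Module K M] (s n : ℕ)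
    (T : ℕ → ℕ → ℕ → M) :
    (cubeSum (s + 1) fun i j k =>
      ((n + 1).descFactorial (i + 2 * j + 3 * k) * chainCoeff K s i j k : K) • T i j k) =
      (cubeSum (s + 1) fun i j k =>
        (n.descFactorial (i + 2 * j + 3 * k) * chainCoeff K s i j k : K) • T i j k)
      - (cubeSum (s + 1) fun i j k => ((j + 1 : ℕ) *
          (n.descFactorial (i + 2 * (j + 1) + 3 * k) * chainCoeff K s i (j + 1) k) : K) •
            T i j (k + 1))
      - (cubeSum (s + 1) fun i j k => ((i + 1 : ℕ) *
          (n.descFactorial (i + 1 + 2 * j + 3 * k) * chainCoeff K s (i + 1) j k) : K) •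
            T i (j + 1) k)
      - (cubeSum (s + 1) fun i j k => ((s - (i + j + k) : ℕ) *
          (n.descFactorial (i + 2 * j + 3 * k) * chainCoeff K s i j k) : K) •
            T (i + 1) j k) := by
  have hF (i j k : ℕ) (h : s + 1 ≤ i ∨ s + 1 ≤ j ∨ s + 1 ≤ k) : chainCoeff K s i j k = 0 :=
    chainCoeff_eq_zero (by omega)
  -- Pascal's rule splits off `(i + 2j + 3k) * n.descFactorial (i + 2j + 3k - 1)`; each of the
  -- three parts is then shifted back by one of the identities `succ_mul_chainCoeff_succ_*`.
  have hsplit (i j k : ℕ) :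
      (((n + 1).descFactorial (i + 2 * j + 3 * k) * chainCoeff K s i j k : K) • T i j k) =
        (n.descFactorial (i + 2 * j + 3 * k) * chainCoeff K s i j k : K) • T i j k
        + (k : K) • ((3 * n.descFactorial (i + 2 * j + 3 * k - 1) * chainCoeff K s i j k) •
            T i j k)
        + (j : K) • ((2 * n.descFactorial (i + 2 * j + 3 * k - 1) * chainCoeff K s i j k) •
            T i j k)
        + (i : K) • ((n.descFactorial (i + 2 * j + 3 * k - 1) * chainCoeff K s i j k) •
            T i j k) := by
    simp only [smul_smul, ← add_smul, succ_descFactorial_eq_add]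
    congr 1
    push_cast
    ring
  simp only [hsplit, cubeSum_add]
  rw [cubeSum_shift_fst (f := fun i j k => (i : K) • _) (by simp) (by simp [hF]),
    cubeSum_shift_snd (f := fun i j k => (j : K) • _) (by simp) (by simp [hF]),
    cubeSum_shift_thd (f := fun i j k => (k : K) • _) (by simp) (by simp [hF])]
  simp only [smul_smul, succ_mul_chainCoeff_succ_fst, succ_mul_chainCoeff_succ_snd,
    succ_mul_chainCoeff_succ_thd, neg_smul, cubeSum_neg]
  abel

end Coeff

section Chain

variable {A : Type*} [Ring A]

/-- The monomial produced from `e ^ n * d ^ s` when `i`, `j`, `k` of the letters `d` have been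
turned into `c`, `b`, `a` respectively; this uses up `i + 2 * j + 3 * k` factors `e`. -/
def chainTerm (a b c d e : A) (s n i j k : ℕ) : A :=
  a ^ k * b ^ j * c ^ i * d ^ (s - (i + j + k)) * e ^ (n - (i + 2 * j + 3 * k))

variable {a b c d e : A}

theorem mul_chainTerm (hab : Commute a b) (hbc : Commute b c) (hcd : Commute c d)
    (hae : Commute a e) (heb : e * b = b * e - a) (hec : e * c = c * e - b)
    (hed : e * d = d * e - c) {s n i j k : ℕ} (hn : i + 2 * j + 3 * k ≤ n) :
    e * chainTerm a b c d e s n i j k = chainTerm a b c d e s (n + 1) i j k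
      - j • chainTerm a b c d e s (n + 1) i (j - 1) (k + 1)
      - i • chainTerm a b c d e s (n + 1) (i - 1) (j + 1) k
      - (s - (i + j + k)) • chainTerm a b c d e s (n + 1) (i + 1) j k := by
  have hj : j • chainTerm a b c d e s (n + 1) i (j - 1) (k + 1) = j • (a ^ (k + 1) *
      b ^ (j - 1) * c ^ i * d ^ (s - (i + j + k)) * e ^ (n - (i + 2 * j + 3 * k))) := by
    rcases j with _ | j
    · simp
    simp only [chainTerm, Nat.add_sub_cancel, show i + j + (k + 1) = i + (j + 1) + k by ring,
      show n + 1 - (i + 2 * j + 3 * (k + 1)) = n - (i + 2 * (j + 1) + 3 * k) by omega]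
  have hi : i • chainTerm a b c d e s (n + 1) (i - 1) (j + 1) k = i • (a ^ k * b ^ (j + 1) *
      c ^ (i - 1) * d ^ (s - (i + j + k)) * e ^ (n - (i + 2 * j + 3 * k))) := by
    rcases i with _ | i
    · simp
    simp only [chainTerm, Nat.add_sub_cancel, show i + (j + 1) + k = i + 1 + j + k by ring,
      show n + 1 - (i + 2 * (j + 1) + 3 * k) = n - (i + 1 + 2 * j + 3 * k) by omega]
  have hs : chainTerm a b c d e s (n + 1) (i + 1) j k = a ^ k * b ^ j * c ^ (i + 1) *
      d ^ (s - (i + j + k) - 1) * e ^ (n - (i + 2 * j + 3 * k)) := by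
    simp only [chainTerm, Nat.sub_sub, show i + 1 + j + k = i + j + k + 1 by ring,
      show n + 1 - (i + 1 + 2 * j + 3 * k) = n - (i + 2 * j + 3 * k) by omega]
  rw [hj, hi, hs, chainTerm, chainTerm, ← mul_assoc, mul_monomial hab hbc hcd hae heb hec hed]
  simp only [sub_mul, smul_mul_assoc]
  rw [mul_assoc _ e, ← pow_succ',
    show n - (i + 2 * j + 3 * k) + 1 = n + 1 - (i + 2 * j + 3 * k) by omega]

variable {K : Type*} [Field K] [CharZero K] [Algebra K A]

theorem pow_mul_pow_eq_cubeSum_of_chain₄ (hab : Commute a b) (hbc : Commute b c)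
    (hcd : Commute c d) (hae : Commute a e) (heb : e * b = b * e - a)
    (hec : e * c = c * e - b) (hed : e * d = d * e - c) (s n : ℕ) :
    e ^ n * d ^ s = cubeSum (s + 1) fun i j k =>
      ((n.descFactorial (i + 2 * j + 3 * k) : K) * chainCoeff K s i j k) •
        chainTerm a b c d e s n i j k := by
  induction n with
  | zero =>
    rw [cubeSum_eq_apply_zero fun i j k h => by
      simp [Nat.descFactorial_eq_zero_iff_lt.2 (by omega : 0 < i + 2 * j + 3 * k)]]
    simp [chainCoeff, chainTerm]
  | succ n ih =>
    have hF (i j k : ℕ) (h : s + 1 ≤ i ∨ s + 1 ≤ j ∨ s + 1 ≤ k) : chainCoeff K s i j k = 0 :=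
      chainCoeff_eq_zero (by omega)
    have hexp (i j k : ℕ) (C : K) (hC : C = n.descFactorial (i + 2 * j + 3 * k) *
        chainCoeff K s i j k) : e * (C • chainTerm a b c d e s n i j k) =
        C • chainTerm a b c d e s (n + 1) i j k
          - ((j : K) * C) • chainTerm a b c d e s (n + 1) i (j - 1) (k + 1)
          - ((i : K) * C) • chainTerm a b c d e s (n + 1) (i - 1) (j + 1) k
          - (((s - (i + j + k) : ℕ) : K) * C) • chainTerm a b c d e s (n + 1) (i + 1) j k := by
      rcases lt_or_ge n (i + 2 * j + 3 * k) with hn | hn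
      · simp [hC, Nat.descFactorial_eq_zero_iff_lt.2 hn]
      rw [mul_smul_comm, mul_chainTerm hab hbc hcd hae heb hec hed hn]
      simp only [← Nat.cast_smul_eq_nsmul K, smul_sub, smul_smul, mul_comm]
    rw [cubeSum_succ_descFactorial_smul, pow_succ', mul_assoc, ih, mul_cubeSum]
    simp only [hexp _ _ _ _ rfl, cubeSum_sub]
    rw [cubeSum_shift_snd (f := fun i j k => ((j : K) * _) • _) (by simp) (by simp [hF]),
      cubeSum_shift_fst (f := fun i j k => ((i : K) * _) • _) (by simp) (by simp [hF])]
    simp only [Nat.add_sub_cancel, Nat.cast_add, Nat.cast_one]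

theorem pow_mul_pow_eq_sum_of_chain₂ (hab : Commute a b) (hae : Commute a e)
    (heb : e * b = b * e - a) (n q : ℕ) :
    e ^ n * b ^ q = ∑ α ∈ range (min n q + 1),
      ((n.descFactorial α : K) * chainCoeff K q α 0 0) • (a ^ α * b ^ (q - α) * e ^ (n - α)) := by
  rw [pow_mul_pow_eq_cubeSum_of_chain₄ (K := K) (Commute.zero_left 0) (Commute.zero_left a) hab
      (Commute.zero_left e) (by simp) (by simp [hae.eq]) heb q n,
    cubeSum_eq_sum_fst fun i j k h => by rcases h with h | h <;> simp [chainTerm, zero_pow h]]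
  simp only [chainTerm, mul_zero, add_zero, pow_zero, one_mul]
  refine (sum_subset (range_subset_range.2 (by omega : min n q + 1 ≤ q + 1))
    fun α hα hα' => ?_).symm
  simp only [mem_range, not_lt] at hα hα'
  simp [Nat.descFactorial_eq_zero_iff_lt.2 (by omega : n < α)]

theorem pow_mul_pow_eq_sum_of_chain₃ (hab : Commute a b) (hbc : Commute b c) (hae : Commute a e)
    (heb : e * b = b * e - a) (hec : e * c = c * e - b) (n r : ℕ) :
    e ^ n * c ^ r = ∑ β₁ ∈ range (r + 1), ∑ β₂ ∈ range (r + 1),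
      ((n.descFactorial (β₁ + 2 * β₂) : K) * chainCoeff K r β₁ β₂ 0) •
        (a ^ β₂ * b ^ β₁ * c ^ (r - (β₁ + β₂)) * e ^ (n - (β₁ + 2 * β₂))) := by
  rw [pow_mul_pow_eq_cubeSum_of_chain₄ (K := K) (Commute.zero_left a) hab hbc
      (Commute.zero_left e) (by simp [hae.eq]) heb hec r n,
    cubeSum_eq_sum_fst_snd fun i j k h => by simp [chainTerm, zero_pow h]]
  simp only [chainTerm, mul_zero, add_zero, pow_zero, one_mul]

end Chain

section Relations

variable {A : Type*} [Ring A]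

structure FiliformRelations (a b c d e : A) : Prop where
  comm_ab : Commute a b
  comm_ac : Commute a c
  comm_ad : Commute a d
  comm_bc : Commute b c
  comm_bd : Commute b d
  comm_cd : Commute c d
  comm_ae : Commute a e
  mul_eb : e * b = b * e - a
  mul_ec : e * c = c * e - b
  mul_ed : e * d = d * e - c

namespace FiliformRelations

variable {a b c d e : A}

theorem monomial_mul (h : FiliformRelations a b c d e) (i k l m i' k' l' m' : ℕ) :
    a ^ i * b ^ k * c ^ l * d ^ m * (a ^ i' * b ^ k' * c ^ l' * d ^ m') =
      a ^ (i + i') * b ^ (k + k') * c ^ (l + l') * d ^ (m + m') :=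
  monomial_mul_monomial h.comm_ab h.comm_ac h.comm_ad h.comm_bc h.comm_bd h.comm_cd ..

variable {K : Type*} [Field K] [CharZero K] [Algebra K A]

theorem normalOrder_b (h : FiliformRelations a b c d e) (i k l m n q : ℕ) :
    a ^ i * b ^ k * c ^ l * d ^ m * e ^ n * b ^ q = ∑ α ∈ range (min n q + 1),
      ((n.descFactorial α : K) * chainCoeff K q α 0 0) •
        (a ^ (i + α) * b ^ (k + (q - α)) * c ^ l * d ^ m * e ^ (n - α)) := by
  rw [mul_assoc, pow_mul_pow_eq_sum_of_chain₂ (K := K) h.comm_ab h.comm_ae h.mul_eb, mul_sum]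
  refine sum_congr rfl fun α _ => ?_
  rw [mul_smul_comm, ← mul_assoc]
  congr 2
  simpa using h.monomial_mul i k l m α (q - α) 0 0

theorem normalOrder_c (h : FiliformRelations a b c d e) (i k l m n r : ℕ) :
    a ^ i * b ^ k * c ^ l * d ^ m * e ^ n * c ^ r =
      ∑ β₁ ∈ range (r + 1), ∑ β₂ ∈ range (r + 1),
        ((n.descFactorial (β₁ + 2 * β₂) : K) * chainCoeff K r β₁ β₂ 0) •
          (a ^ (i + β₂) * b ^ (k + β₁) * c ^ (l + (r - (β₁ + β₂))) * d ^ m *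
            e ^ (n - (β₁ + 2 * β₂))) := by
  rw [mul_assoc, pow_mul_pow_eq_sum_of_chain₃ (K := K) h.comm_ab h.comm_bc h.comm_ae h.mul_eb
      h.mul_ec, mul_sum]
  refine sum_congr rfl fun β₁ _ => ?_
  rw [mul_sum]
  refine sum_congr rfl fun β₂ _ => ?_
  rw [mul_smul_comm, ← mul_assoc]
  congr 2
  simpa using h.monomial_mul i k l m β₂ β₁ (r - (β₁ + β₂)) 0

theorem normalOrder_d (h : FiliformRelations a b c d e) (i k l m n s : ℕ) :
    a ^ i * b ^ k * c ^ l * d ^ m * e ^ n * d ^ s =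
      ∑ γ₁ ∈ range (s + 1), ∑ γ₂ ∈ range (s + 1), ∑ γ₃ ∈ range (s + 1),
        ((n.descFactorial (γ₁ + 2 * γ₂ + 3 * γ₃) : K) * chainCoeff K s γ₁ γ₂ γ₃) •
          (a ^ (i + γ₃) * b ^ (k + γ₂) * c ^ (l + γ₁) * d ^ (m + (s - (γ₁ + γ₂ + γ₃))) *
            e ^ (n - (γ₁ + 2 * γ₂ + 3 * γ₃))) := by
  rw [mul_assoc, pow_mul_pow_eq_cubeSum_of_chain₄ (K := K) h.comm_ab h.comm_bc h.comm_cd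
      h.comm_ae h.mul_eb h.mul_ec h.mul_ed, mul_cubeSum]
  refine sum_congr rfl fun γ₁ _ => sum_congr rfl fun γ₂ _ => sum_congr rfl fun γ₃ _ => ?_
  dsimp only
  rw [mul_smul_comm, chainTerm, ← mul_assoc, h.monomial_mul]

theorem monomial_mul_monomial_eq_sum (h : FiliformRelations a b c d e)
    (j k l m n p q r s t : ℕ) :
    (a ^ j * b ^ k * c ^ l * d ^ m * e ^ n) * (a ^ p * b ^ q * c ^ r * d ^ s * e ^ t) =
      ∑ α ∈ range (min n q + 1), ∑ β₁ ∈ range (r + 1), ∑ β₂ ∈ range (r + 1),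
      ∑ γ₁ ∈ range (s + 1), ∑ γ₂ ∈ range (s + 1), ∑ γ₃ ∈ range (s + 1),
        ((n.descFactorial α : K) * chainCoeff K q α 0 0 *
          ((n - α).descFactorial (β₁ + 2 * β₂) * chainCoeff K r β₁ β₂ 0 *
            ((n - α - (β₁ + 2 * β₂)).descFactorial (γ₁ + 2 * γ₂ + 3 * γ₃) *
              chainCoeff K s γ₁ γ₂ γ₃))) •
          (a ^ (j + p + α + β₂ + γ₃) * b ^ (k + (q - α) + β₁ + γ₂) *
            c ^ (l + (r - (β₁ + β₂)) + γ₁) * d ^ (m + (s - (γ₁ + γ₂ + γ₃))) *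
            e ^ (n - α - (β₁ + 2 * β₂) - (γ₁ + 2 * γ₂ + 3 * γ₃) + t)) := by
  have hstart : (a ^ j * b ^ k * c ^ l * d ^ m * e ^ n) * (a ^ p * b ^ q * c ^ r * d ^ s * e ^ t) =
      a ^ (j + p) * b ^ k * c ^ l * d ^ m * e ^ n * b ^ q * c ^ r * d ^ s * e ^ t := by
    have hp := h.monomial_mul j k l m p 0 0 0
    simp only [pow_zero, mul_one, add_zero] at hp
    simp only [← mul_assoc]
    rw [mul_assoc _ (e ^ n), ← (h.comm_ae.pow_pow p n).eq, ← mul_assoc, hp]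
  rw [hstart, h.normalOrder_b (K := K)]
  simp only [sum_mul, smul_mul_assoc, h.normalOrder_c (K := K)]
  simp only [sum_mul, smul_mul_assoc, h.normalOrder_d (K := K)]
  simp only [smul_sum, smul_smul, mul_assoc _ (e ^ _), ← pow_add]

end FiliformRelations

end Relations

variable {K : Type*} [Field K] [CharZero K] in
set_option maxHeartbeats 400000 in
theorem chainCoeff_product_eq_choose (n q r s α β₁ β₂ γ₁ γ₂ γ₃ : ℕ) :
    (n.descFactorial α : K) * chainCoeff K q α 0 0 *
        ((n - α).descFactorial (β₁ + 2 * β₂) * chainCoeff K r β₁ β₂ 0 *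
          ((n - α - (β₁ + 2 * β₂)).descFactorial (γ₁ + 2 * γ₂ + 3 * γ₃) *
            chainCoeff K s γ₁ γ₂ γ₃)) =
      (-1 : K) ^ (α + β₁ + γ₁ + γ₃) *
        ((n.choose α * q.choose α * r.choose (β₁ + β₂) * (n - α).choose (β₁ + 2 * β₂)
          * (β₁ + β₂).choose β₁ * s.choose (γ₁ + γ₂ + γ₃)
          * (n - α - β₁ - 2 * β₂).choose (γ₁ + 2 * γ₂ + 3 * γ₃)
          * α.factorial * (β₁ + 2 * β₂).factorial
          * (γ₁ + γ₂ + γ₃).factorial * (γ₁ + 2 * γ₂ + 3 * γ₃).factorial : ℕ) : K)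
        / ((2 ^ β₂ * (Nat.factorial 2) ^ γ₂ * (Nat.factorial 3) ^ γ₃
            * γ₃.factorial * γ₂.factorial * γ₁.factorial : ℕ) : K) := by
  have hfac (x : ℕ) : (x.factorial : K) ≠ 0 := Nat.cast_ne_zero.2 (Nat.factorial_ne_zero x)
  have := hfac α; have := hfac β₁; have := hfac β₂
  have := hfac γ₁; have := hfac γ₂; have := hfac γ₃
  rw [Nat.sub_sub (n - α) β₁, Nat.choose_symm_add]
  simp only [chainCoeff, Nat.descFactorial_eq_factorial_mul_choose, add_zero, pow_zero,
    Nat.factorial_zero, Nat.cast_one, mul_one, one_mul, Nat.factorial_two,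
    show Nat.factorial 3 = 6 from rfl]
  rw [← Nat.add_choose_mul_factorial_mul_factorial β₁ β₂]
  push_cast
  field_simp
  ring

end Filiform

open UniversalEnvelopingAlgebra

namespace Filiform

variable {K L : Type*} [CommRing K] [LieRing L] [LieAlgebra K L]

theorem ι_mul_ι_sub_ι_mul_ι (x y : L) : ι K x * ι K y - ι K y * ι K x = ι K ⁅x, y⁆ := by
  let _ : LieRing (UniversalEnvelopingAlgebra K L) := LieRing.ofAssociativeRing
  exact ((ι K).map_lie x y).symm

theorem commute_ι_of_lie_eq_zero {x y : L} (h : ⁅x, y⁆ = 0) : Commute (ι K x) (ι K y) :=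
  sub_eq_zero.1 (by rw [ι_mul_ι_sub_ι_mul_ι, h, map_zero])

theorem ι_mul_ι_of_lie_eq_neg {x y z : L} (h : ⁅x, y⁆ = -z) :
    ι K x * ι K y = ι K y * ι K x - ι K z := by
  rw [sub_eq_iff_eq_add'.1 (ι_mul_ι_sub_ι_mul_ι (K := K) x y), h, map_neg]
  abel

theorem filiformRelations_ι {x1 x2 x3 x4 x5 : L}
    (h52 : ⁅x5, x2⁆ = -x1) (h53 : ⁅x5, x3⁆ = -x2) (h54 : ⁅x5, x4⁆ = -x3)
    (h12 : ⁅x1, x2⁆ = 0) (h13 : ⁅x1, x3⁆ = 0) (h14 : ⁅x1, x4⁆ = 0) (h15 : ⁅x1, x5⁆ = 0)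
    (h23 : ⁅x2, x3⁆ = 0) (h24 : ⁅x2, x4⁆ = 0) (h34 : ⁅x3, x4⁆ = 0) :
    FiliformRelations (ι K x1) (ι K x2) (ι K x3) (ι K x4) (ι K x5) :=
  ⟨commute_ι_of_lie_eq_zero h12, commute_ι_of_lie_eq_zero h13, commute_ι_of_lie_eq_zero h14,
    commute_ι_of_lie_eq_zero h23, commute_ι_of_lie_eq_zero h24, commute_ι_of_lie_eq_zero h34,
    commute_ι_of_lie_eq_zero h15, ι_mul_ι_of_lie_eq_neg h52, ι_mul_ι_of_lie_eq_neg h53,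
    ι_mul_ι_of_lie_eq_neg h54⟩

end Filiform

open Filiform Finset in
theorem stmt_15 {K : Type*} [Field K] [CharZero K]
    {L : Type*} [LieRing L] [LieAlgebra K L]
    (x1 x2 x3 x4 x5 : L)
    (h52 : ⁅x5, x2⁆ = -x1) (h53 : ⁅x5, x3⁆ = -x2) (h54 : ⁅x5, x4⁆ = -x3)
    (h12 : ⁅x1, x2⁆ = 0) (h13 : ⁅x1, x3⁆ = 0) (h14 : ⁅x1, x4⁆ = 0) (h15 : ⁅x1, x5⁆ = 0)
    (h23 : ⁅x2, x3⁆ = 0) (h24 : ⁅x2, x4⁆ = 0) (h34 : ⁅x3, x4⁆ = 0)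
    (j k l m n p q r s t : ℕ) :
    ((ι K x1 : UniversalEnvelopingAlgebra K L) ^ (j) * (ι K x2 : UniversalEnvelopingAlgebra K L) ^ (k) * (ι K x3 : UniversalEnvelopingAlgebra K L) ^ (l) * (ι K x4 : UniversalEnvelopingAlgebra K L) ^ (m) * (ι K x5 : UniversalEnvelopingAlgebra K L) ^ (n))
      * ((ι K x1 : UniversalEnvelopingAlgebra K L) ^ (p) * (ι K x2 : UniversalEnvelopingAlgebra K L) ^ (q) * (ι K x3 : UniversalEnvelopingAlgebra K L) ^ (r) * (ι K x4 : UniversalEnvelopingAlgebra K L) ^ (s) * (ι K x5 : UniversalEnvelopingAlgebra K L) ^ (t)) =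
      ∑ α ∈ Finset.range (min n q + 1),
      ∑ β1 ∈ Finset.range (r + 1), ∑ β2 ∈ Finset.range (r + 1),
        if β1 + β2 ≤ r ∧ β1 + 2 * β2 ≤ n - α then
          ∑ γ1 ∈ Finset.range (s + 1), ∑ γ2 ∈ Finset.range (s + 1), ∑ γ3 ∈ Finset.range (s + 1),
            if γ1 + γ2 + γ3 ≤ s ∧ γ1 + 2 * γ2 + 3 * γ3 ≤ n - α - β1 - 2 * β2 then
              ((-1 : K) ^ (α + β1 + γ1 + γ3) *
                ((n.choose α * q.choose α * r.choose (β1 + β2) * (n - α).choose (β1 + 2 * β2)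
                  * (β1 + β2).choose β1 * s.choose (γ1 + γ2 + γ3)
                  * (n - α - β1 - 2 * β2).choose (γ1 + 2 * γ2 + 3 * γ3)
                  * α.factorial * (β1 + 2 * β2).factorial
                  * (γ1 + γ2 + γ3).factorial * (γ1 + 2 * γ2 + 3 * γ3).factorial : ℕ) : K)
                / ((2 ^ β2 * (Nat.factorial 2) ^ γ2 * (Nat.factorial 3) ^ γ3
                    * γ3.factorial * γ2.factorial * γ1.factorial : ℕ) : K)) •
                ((ι K x1 : UniversalEnvelopingAlgebra K L) ^ (j + p + α + β2 + γ3) * (ι K x2 : UniversalEnvelopingAlgebra K L) ^ (k + q - α + β1 + γ2)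
                  * (ι K x3 : UniversalEnvelopingAlgebra K L) ^ (l + r - β1 - β2 + γ1) * (ι K x4 : UniversalEnvelopingAlgebra K L) ^ (m + s - γ1 - γ2 - γ3)
                  * (ι K x5 : UniversalEnvelopingAlgebra K L) ^ (n + t - α - β1 - 2 * β2 - γ1 - 2 * γ2 - 3 * γ3))
            else 0
        else 0 := by
  have h := filiformRelations_ι (K := K) h52 h53 h54 h12 h13 h14 h15 h23 h24 h34
  rw [h.monomial_mul_monomial_eq_sum (K := K)]
  refine sum_congr rfl fun α hα => sum_congr rfl fun β1 _ => sum_congr rfl fun β2 _ => ?_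
  rw [mem_range] at hα
  split_ifs with hβ
  · refine sum_congr rfl fun γ1 _ => sum_congr rfl fun γ2 _ => sum_congr rfl fun γ3 _ => ?_
    split_ifs with hγ
    · rw [chainCoeff_product_eq_choose,
        show k + (q - α) + β1 + γ2 = k + q - α + β1 + γ2 by omega,
        show l + (r - (β1 + β2)) + γ1 = l + r - β1 - β2 + γ1 by omega,
        show m + (s - (γ1 + γ2 + γ3)) = m + s - γ1 - γ2 - γ3 by omega,
        show n - α - (β1 + 2 * β2) - (γ1 + 2 * γ2 + 3 * γ3) + t =
          n + t - α - β1 - 2 * β2 - γ1 - 2 * γ2 - 3 * γ3 by omega]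
    · rw [descFactorial_mul_chainCoeff_eq_zero (by omega), mul_zero, mul_zero, zero_smul]
  · have hC := descFactorial_mul_chainCoeff_eq_zero (K := K) (n := n - α) (s := r) (γ₁ := β1)
      (γ₂ := β2) (γ₃ := 0) (by omega)
    simp only [mul_zero, add_zero] at hC
    simp [hC]
end
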